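/- arXiv:1406.4537 — 3 statements merged into one kernel-verified Lean document; each statement's English description precedes it below -/
import Mathlib

section
/- Let d ≥ 2, κ ∈ (0,1), c₁ = √d, v = 8, α = 240, and let c₃, c₄ > 1 be constants with c₅ = 2c₃c₄. Let scales L_k, N_k, L̃_k (k ≥ 0) satisfy L₀ > 0, 3√d < L̃₀ ≤ L₀³, N_k ≥ 7, L_{k+1} = N_k L_k, L̃_{k+1} = N_k³ L̃_k, and set u₀ = 3(d−1)/(L₀ log(1/κ)), u_k = u₀ v^{−k}. Assume condition (G): u_k N_k ≥ α c₁ for all k ≥ 0 and c₅ N_{k+1}^{3(d−1)} L_{k+1}^{3d−1} κ^{u_{k+1}L_{k+1}} ≤ 1 for all k ≥ 0. Let (φ_k)_{k≥0} be nonnegative reals satisfying, for every k ≥ 0, the recursion φ_{k+1} ≤ c₃ c₄ L̃_{k+2}^{d−1} L_{k+1} { κ^{−10 c₁ L_{k+1}} φ_k^{N_k²/12} + Σ_{0 ≤ m ≤ N_k+1} φ_k^{(⌊N_k⌋+m−1)/2} }. If φ₀ ≤ κ^{u₀ L₀}, then φ_k ≤ κ^{u_k L_k} for all k ≥ 0.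 -/
noncomputable section

open Real Filter

/-- `fseq 0 x = 1`, `fseq 1 x = 8 ^ x`, and `fseq (k+1) = fseq k ∘ fseq 1` for `k ≥ 1`. -/
noncomputable def fseq : ℕ → ℝ → ℝ
  | 0, _ => 1
  | 1, x => (8 : ℝ) ^ x
  | (k+2), x => fseq (k+1) ((8 : ℝ) ^ x)

/-- `u₀ = 3(d-1)/(L₀ log(1/κ))`. -/
noncomputable def u0 (d : ℕ) (L₀ κ : ℝ) : ℝ := 3 * ((d : ℝ) - 1) / (L₀ * Real.log (1 / κ))

/-- `u_k = u₀ v^{-k}` with `v = 8`. -/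
noncomputable def useq (d : ℕ) (L₀ κ : ℝ) (k : ℕ) : ℝ := u0 d L₀ κ / 8 ^ k

/-- The chosen scales `N_k = (α c₁/u₀) f_{[(k+2)/2]}([(k+1)/2]) / f_{[(k+1)/2]}([k/2])`,
with `α = 240`. -/
noncomputable def Nscale (c₁ u₀ : ℝ) (k : ℕ) : ℝ :=
  (240 * c₁ / u₀) * fseq ((k+2)/2) (((k+1)/2 : ℕ) : ℝ) / fseq ((k+1)/2) ((k/2 : ℕ) : ℝ)

/-- The chosen scales `L_k = f_{[(k+1)/2]}([k/2]) (α c₁/u₀)^k L₀`. -/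
noncomputable def Lscale (c₁ u₀ L₀ : ℝ) (k : ℕ) : ℝ :=
  fseq ((k+1)/2) ((k/2 : ℕ) : ℝ) * (240 * c₁ / u₀) ^ k * L₀

/-- The transversal scales `L̃_0 = L̃₀`, `L̃_{k+1} = N_k³ L̃_k`. -/
noncomputable def Ltscale (c₁ u₀ Lt₀ : ℝ) : ℕ → ℝ
  | 0 => Lt₀
  | (k+1) => (Nscale c₁ u₀ k) ^ 3 * Ltscale c₁ u₀ Lt₀ k

/-!
Write `a_k = u_k L_k`, so that `u_{k+1} L_{k+1} = a_k N_k / 8`. If `φ_k ≤ κ^{a_k}`, then because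
`N_k ≥ 7`, and because `u_k N_k ≥ 240 √d` absorbs the loss `κ^{-10 √d L_{k+1}}`, every term in the
braces of the recursion is at most `κ^{2 u_{k+1} L_{k+1}}`. There are at most `N_k + 3 ≤ 2 L_{k+1}`
such terms, and `L̃_{k+2} ≤ L_{k+2}³ = (N_{k+1} L_{k+1})³`, so the second half of condition (G)
says exactly that the prefactor and the number of terms cost at most one factor `κ^{u_{k+1} L_{k+1}}`.
-/

lemma useq_succ (d : ℕ) (L₀ κ : ℝ) (k : ℕ) : useq d L₀ κ (k + 1) = useq d L₀ κ k / 8 := by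
  rw [useq, useq, pow_succ, div_mul_eq_div_div]

lemma one_le_of_mul_rec {L N : ℕ → ℝ} (hL₀ : 1 ≤ L 0) (hN : ∀ k, 1 ≤ N k)
    (hLrec : ∀ k, L (k + 1) = N k * L k) (k : ℕ) : 1 ≤ L k := by
  induction k with
  | zero => exact hL₀
  | succ k ih => rw [hLrec]; nlinarith [hN k]

lemma nonneg_of_mul_rec {Lt N : ℕ → ℝ} (hLt₀ : 0 ≤ Lt 0) (hN : ∀ k, 0 ≤ N k)
    (hLtrec : ∀ k, Lt (k + 1) = N k ^ 3 * Lt k) (k : ℕ) : 0 ≤ Lt k := by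
  induction k with
  | zero => exact hLt₀
  | succ k ih => rw [hLtrec]; have := hN k; positivity

lemma le_cube_of_mul_rec {L N Lt : ℕ → ℝ} (hLt₀ : Lt 0 ≤ L 0 ^ 3) (hN : ∀ k, 0 ≤ N k)
    (hLrec : ∀ k, L (k + 1) = N k * L k) (hLtrec : ∀ k, Lt (k + 1) = N k ^ 3 * Lt k) (k : ℕ) :
    Lt k ≤ L k ^ 3 := by
  induction k with
  | zero => exact hLt₀
  | succ k ih =>
    rw [hLtrec, hLrec, mul_pow]
    exact mul_le_mul_of_nonneg_left ih (pow_nonneg (hN k) 3)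

lemma two_mul_mul_sq_mul_le_one {c T N L x : ℝ} {d : ℕ} (hd : 1 ≤ d) (hc : 0 ≤ c) (hT : 0 ≤ T)
    (hTNL : T ≤ (N * L) ^ 3) (hx : 0 ≤ x)
    (hG : 2 * c * N ^ (3 * (d - 1)) * L ^ (3 * d - 1) * x ≤ 1) :
    2 * (c * T ^ (d - 1)) * L ^ 2 * x ≤ 1 := by
  have hpow : T ^ (d - 1) ≤ N ^ (3 * (d - 1)) * L ^ (3 * (d - 1)) := by
    calc T ^ (d - 1) ≤ ((N * L) ^ 3) ^ (d - 1) := pow_le_pow_left₀ hT hTNL _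
      _ = N ^ (3 * (d - 1)) * L ^ (3 * (d - 1)) := by rw [← pow_mul, mul_pow]
  have hexp : 3 * d - 1 = 3 * (d - 1) + 2 := by omega
  calc 2 * (c * T ^ (d - 1)) * L ^ 2 * x
      ≤ 2 * (c * (N ^ (3 * (d - 1)) * L ^ (3 * (d - 1)))) * L ^ 2 * x := by gcongr
    _ = 2 * c * N ^ (3 * (d - 1)) * L ^ (3 * d - 1) * x := by rw [hexp, pow_add]; ring
    _ ≤ 1 := hG

section OneStep

variable {κ : ℝ}

lemma rpow_le_rpow_of_le_rpow (hκ0 : 0 < κ) (hκ1 : κ < 1) {φ a e b : ℝ} (hφ : 0 ≤ φ)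
    (hφa : φ ≤ κ ^ a) (he : 0 ≤ e) (hb : b ≤ a * e) : φ ^ e ≤ κ ^ b :=
  calc φ ^ e ≤ (κ ^ a) ^ e := Real.rpow_le_rpow hφ hφa he
    _ = κ ^ (a * e) := (Real.rpow_mul hκ0.le a e).symm
    _ ≤ κ ^ b := Real.rpow_le_rpow_of_exponent_ge hκ0 hκ1.le hb

variable {s u N L φ : ℝ}

lemma rpow_neg_mul_rpow_sq_le (hκ0 : 0 < κ) (hκ1 : κ < 1) (hu : 0 ≤ u) (hL : 0 ≤ L)
    (hN : 6 ≤ N) (hG : 240 * s ≤ u * N) (hφ : 0 ≤ φ) (hφle : φ ≤ κ ^ (u * L)) :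
    κ ^ (-(10 * s * (N * L))) * φ ^ (N ^ 2 / 12) ≤ κ ^ (2 * (u / 8 * (N * L))) := by
  have hexp : 2 * (u / 8 * (N * L)) + 10 * s * (N * L) ≤ u * L * (N ^ 2 / 12) := by
    nlinarith [mul_le_mul_of_nonneg_right hG (by positivity : 0 ≤ N * L / 24),
      mul_nonneg (mul_nonneg (mul_nonneg hu hL) (by linarith : 0 ≤ N)) (by linarith : 0 ≤ N - 6)]
  calc κ ^ (-(10 * s * (N * L))) * φ ^ (N ^ 2 / 12)
      ≤ κ ^ (-(10 * s * (N * L))) * κ ^ (2 * (u / 8 * (N * L)) + 10 * s * (N * L)) := by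
        gcongr
        exact rpow_le_rpow_of_le_rpow hκ0 hκ1 hφ hφle (by positivity) hexp
    _ = κ ^ (2 * (u / 8 * (N * L))) := by rw [← Real.rpow_add hκ0]; ring_nf

lemma sum_rpow_floor_le (hκ0 : 0 < κ) (hκ1 : κ < 1) (hu : 0 ≤ u) (hL : 0 ≤ L) (hN : 4 ≤ N)
    (hφ : 0 ≤ φ) (hφle : φ ≤ κ ^ (u * L)) :
    ∑ m ∈ Finset.range (⌊N⌋₊ + 2), φ ^ ((((⌊N⌋₊ + m : ℕ) : ℝ) - 1) / 2)
      ≤ (⌊N⌋₊ + 2) * κ ^ (2 * (u / 8 * (N * L))) := by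
  have hfloor : N - 1 < ⌊N⌋₊ := Nat.sub_one_lt_floor N
  have hterm : ∀ m ∈ Finset.range (⌊N⌋₊ + 2),
      φ ^ ((((⌊N⌋₊ + m : ℕ) : ℝ) - 1) / 2) ≤ κ ^ (2 * (u / 8 * (N * L))) := by
    intro m _
    have hm : (0 : ℝ) ≤ m := m.cast_nonneg
    push_cast
    refine rpow_le_rpow_of_le_rpow hκ0 hκ1 hφ hφle (by linarith) ?_
    nlinarith [mul_nonneg hu hL, mul_nonneg (mul_nonneg hu hL) (by linarith : 0 ≤ N - 4),
      mul_nonneg (mul_nonneg hu hL) (by linarith : 0 ≤ ((⌊N⌋₊ : ℝ) + m - 1) / 2 - (N - 2) / 2)]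
  simpa [nsmul_eq_mul] using Finset.sum_le_card_nsmul _ _ _ hterm

lemma le_rpow_of_renormalization_step {A φ' : ℝ} (hκ0 : 0 < κ) (hκ1 : κ < 1) (hA : 0 ≤ A)
    (hu : 0 ≤ u) (hL : 1 ≤ L) (hN : 7 ≤ N) (hG1 : 240 * s ≤ u * N)
    (hG2 : 2 * A * (N * L) ^ 2 * κ ^ (u / 8 * (N * L)) ≤ 1)
    (hφ : 0 ≤ φ) (hφle : φ ≤ κ ^ (u * L))
    (hrec : φ' ≤ A * (N * L) * (κ ^ (-(10 * s * (N * L))) * φ ^ (N ^ 2 / 12) +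
      ∑ m ∈ Finset.range (⌊N⌋₊ + 2), φ ^ ((((⌊N⌋₊ + m : ℕ) : ℝ) - 1) / 2))) :
    φ' ≤ κ ^ (u / 8 * (N * L)) := by
  set x := κ ^ (u / 8 * (N * L))
  have hx : 0 ≤ x := Real.rpow_nonneg hκ0.le _
  have hsq : κ ^ (2 * (u / 8 * (N * L))) = x ^ 2 := by
    rw [two_mul, Real.rpow_add hκ0, sq]
  have hcount : (⌊N⌋₊ : ℝ) + 3 ≤ 2 * (N * L) := by
    nlinarith [Nat.floor_le (by linarith : 0 ≤ N)]
  calc φ' ≤ A * (N * L) * (x ^ 2 + (⌊N⌋₊ + 2) * x ^ 2) := by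
        refine hrec.trans (mul_le_mul_of_nonneg_left ?_ (by positivity))
        rw [← hsq]
        exact add_le_add
          (rpow_neg_mul_rpow_sq_le hκ0 hκ1 hu (by linarith) (by linarith) hG1 hφ hφle)
          (sum_rpow_floor_le hκ0 hκ1 hu (by linarith) (by linarith) hφ hφle)
    _ = A * (N * L) * (⌊N⌋₊ + 3) * x ^ 2 := by ring
    _ ≤ A * (N * L) * (2 * (N * L)) * x ^ 2 := by gcongr
    _ = (2 * A * (N * L) ^ 2 * x) * x := by ring
    _ ≤ x := mul_le_of_le_one_left hx hG2

end OneStep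

/-- Lemma 2.2 (generalized): under condition (G), if `φ₀ ≤ κ^{u₀ L₀}` and the `φ_k`
satisfy the one-step renormalization recursion, then `φ_k ≤ κ^{u_k L_k}` for all `k`. -/
theorem condition_G_induction (d : ℕ) (hd : 2 ≤ d) (κ : ℝ) (hκ0 : 0 < κ) (hκ1 : κ < 1)
    (c₃ c₄ : ℝ) (hc₃ : 1 < c₃) (hc₄ : 1 < c₄)
    (L N Lt : ℕ → ℝ)
    (hL₀ : 0 < L 0) (hLt₀ : 3 * Real.sqrt d < Lt 0) (hLt₀' : Lt 0 ≤ (L 0) ^ 3)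
    (hN : ∀ k, 7 ≤ N k)
    (hLrec : ∀ k, L (k + 1) = N k * L k)
    (hLtrec : ∀ k, Lt (k + 1) = (N k) ^ 3 * Lt k)
    (hG1 : ∀ k : ℕ, 240 * Real.sqrt d ≤ useq d (L 0) κ k * N k)
    (hG2 : ∀ k : ℕ,
      2 * c₃ * c₄ * (N (k + 1)) ^ (3 * (d - 1)) * (L (k + 1)) ^ (3 * d - 1) *
          κ ^ (useq d (L 0) κ (k + 1) * L (k + 1)) ≤ 1)
    (φ : ℕ → ℝ) (hφ : ∀ k, 0 ≤ φ k)
    (hrec : ∀ k : ℕ,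
      φ (k + 1) ≤ c₃ * c₄ * (Lt (k + 2)) ^ (d - 1) * L (k + 1) *
        (κ ^ (-(10 * Real.sqrt d * L (k + 1))) * (φ k) ^ ((N k) ^ 2 / 12) +
          ∑ m ∈ Finset.range (⌊N k⌋₊ + 2),
            (φ k) ^ ((((⌊N k⌋₊ + m : ℕ) : ℝ) - 1) / 2)))
    (hφ0 : φ 0 ≤ κ ^ (u0 d (L 0) κ * L 0)) :
    ∀ k : ℕ, φ k ≤ κ ^ (useq d (L 0) κ k * L k) := by
  have hsqrt : 1 ≤ Real.sqrt d := Real.one_le_sqrt.mpr (by exact_mod_cast (by omega : 1 ≤ d))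
  have hc : 0 ≤ c₃ * c₄ := mul_nonneg (by linarith) (by linarith)
  have hNnonneg : ∀ k, 0 ≤ N k := fun k => by linarith [hN k]
  have hL : ∀ k, 1 ≤ L k := by
    refine one_le_of_mul_rec ?_ (fun k => by linarith [hN k]) hLrec
    exact (one_le_pow_iff_of_nonneg hL₀.le three_ne_zero).mp (by linarith)
  have hLt : ∀ k, 0 ≤ Lt k := nonneg_of_mul_rec (by linarith) hNnonneg hLtrec
  have hu : ∀ k, 0 ≤ useq d (L 0) κ k := fun k =>
    nonneg_of_mul_nonneg_left ((by positivity : (0 : ℝ) ≤ 240 * Real.sqrt d).trans (hG1 k))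
      (by linarith [hN k])
  intro k
  induction k with
  | zero => simpa [useq] using hφ0
  | succ k ih =>
    have hLt2 : Lt (k + 2) ≤ (N (k + 1) * L (k + 1)) ^ 3 := by
      rw [← hLrec]; exact le_cube_of_mul_rec hLt₀' hNnonneg hLrec hLtrec _
    have hG2' := two_mul_mul_sq_mul_le_one (by omega) hc (hLt _) hLt2
      (Real.rpow_nonneg hκ0.le _) (mul_assoc 2 c₃ c₄ ▸ hG2 k)
    rw [useq_succ, hLrec k] at hG2' ⊢
    have hrec' := hrec k
    rw [hLrec k] at hrec'
    exact le_rpow_of_renormalization_step hκ0 hκ1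
      (mul_nonneg hc (pow_nonneg (hLt _) _)) (hu k) (hL k) (hN k) (hG1 k)
      hG2' (hφ k) ih hrec'
end
end

section
/- There exists a constant c₆ depending only on d and κ such that whenever L₀ ≥ c₆, the scales L_k and N_k defined from the functions f_k by N_k = (α c₁/u₀) · f_{[(k+2)/2]}([(k+1)/2]) / f_{[(k+1)/2]}([k/2]) and L_{k+1} = N_k L_k (equivalently L_{k+1} = f_{[(k+2)/2]}([(k+1)/2]) (α c₁/u₀)^{k+1} L₀) satisfy condition (G), i.e. (i) u_k N_k ≥ α c₁ for all k ≥ 0, and (ii) c₅ N_{k+1}^{3(d−1)} L_{k+1}^{3d−1} κ^{u_{k+1} L_{k+1}} ≤ 1 for all k ≥ 0. -/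
noncomputable section

open Real Filter

/-!
Write `A = α c₁/u₀` and `F_k = f_{[(k+1)/2]}([k/2])` (`fscale k`), so that `N_k = A F_{k+1}/F_k`,
`L_k = F_k A^k L₀` and `log(1/κ) u_k L_k = 3(d-1) F_k (A/8)^k`, because `log(1/κ) u₀ L₀ = 3(d-1)`.
Condition (i) is then the growth estimate `8^k F_k ≤ F_{k+1}` of the iterated exponentials.
For (ii), `F_{k+2} ≤ 8^{F_{k+1}}` bounds the logarithm of `c₅ N_{k+1}^{3(d-1)} L_{k+1}^{3d-1}` by
`3(d-1)` times a quantity of order `F_{k+1} + k log A + log L₀`, which is beaten by the exponent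
`3(d-1) F_{k+1} (A/8)^{k+1}` of `κ` as soon as `A`, which is linear in `L₀`, is large.
-/

lemma log_eight : log 8 = 3 * log 2 := by
  rw [show (8:ℝ) = 2 ^ 3 by norm_num, log_pow]; norm_num

lemma two_le_log_eight : 2 ≤ log 8 := by
  linarith [log_eight, log_two_gt_d9]

lemma log_eight_le_three : log 8 ≤ 3 := by
  linarith [log_eight, log_two_lt_d9]

lemma one_add_two_mul_le_rpow_eight {t : ℝ} (ht : 0 ≤ t) : 1 + 2 * t ≤ (8:ℝ) ^ t := by
  rw [rpow_def_of_pos (by norm_num)]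
  nlinarith [add_one_le_exp (log 8 * t), two_le_log_eight]

-- Both factors on the left are at most `8 ^ (F / 2)`.
lemma rpow_eight_mul_le {x F : ℝ} (hF : 0 ≤ F) (hxF : 4 * x ≤ F) :
    (8:ℝ) ^ (2 * x) * F ≤ (8:ℝ) ^ F := by
  have hhalf : F ≤ (8:ℝ) ^ (F / 2) := by
    linarith [one_add_two_mul_le_rpow_eight (t := F / 2) (by linarith)]
  have hexp : (8:ℝ) ^ (2 * x) ≤ (8:ℝ) ^ (F / 2) :=
    rpow_le_rpow_of_exponent_le (by norm_num) (by linarith)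
  calc (8:ℝ) ^ (2 * x) * F ≤ (8:ℝ) ^ (F / 2) * (8:ℝ) ^ (F / 2) :=
        mul_le_mul hexp hhalf hF (by positivity)
    _ = (8:ℝ) ^ F := by rw [← rpow_add (by norm_num)]; ring_nf

lemma fseq_add_two (j : ℕ) (x : ℝ) : fseq (j + 2) x = (8:ℝ) ^ fseq (j + 1) x := by
  induction j generalizing x with
  | zero => rfl
  | succ j ih => exact ih _

lemma one_le_fseq (m : ℕ) {x : ℝ} (hx : 0 ≤ x) : 1 ≤ fseq m x := by
  induction m generalizing x with
  | zero => exact le_rfl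
  | succ m ih =>
    cases m with
    | zero => exact one_le_rpow (by norm_num) hx
    | succ m => exact ih (by positivity)

lemma fseq_mono (m : ℕ) : Monotone (fseq m) := by
  induction m with
  | zero => exact monotone_const
  | succ m ih =>
    have h8 : Monotone fun x : ℝ => (8:ℝ) ^ x := fun _ _ h =>
      rpow_le_rpow_of_exponent_le (by norm_num) h
    cases m with
    | zero => exact h8
    | succ m => exact ih.comp h8

lemma rpow_eight_le_fseq (j : ℕ) {x : ℝ} (hx : 0 ≤ x) : (8:ℝ) ^ x ≤ fseq (j + 1) x := by
  induction j with
  | zero => exact le_rfl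
  | succ j ih =>
    rw [fseq_add_two]
    have hF := one_le_fseq (j + 1) hx
    linarith [one_add_two_mul_le_rpow_eight (t := fseq (j + 1) x) (by linarith)]

lemma eight_mul_fseq_le (j : ℕ) {x : ℝ} (hx : 0 ≤ x) :
    8 * fseq (j + 1) x ≤ fseq (j + 1) (x + 1) := by
  induction j with
  | zero =>
    simp only [fseq, rpow_add (by norm_num : (0:ℝ) < 8), rpow_one, mul_comm, le_refl]
  | succ j ih =>
    rw [fseq_add_two, fseq_add_two]
    calc 8 * (8:ℝ) ^ fseq (j + 1) x = (8:ℝ) ^ (fseq (j + 1) x + 1) := by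
          rw [rpow_add (by norm_num), rpow_one, mul_comm]
      _ ≤ (8:ℝ) ^ fseq (j + 1) (x + 1) :=
          rpow_le_rpow_of_exponent_le (by norm_num) (by linarith [one_le_fseq (j + 1) hx])

def fscale (k : ℕ) : ℝ := fseq ((k + 1) / 2) ((k / 2 : ℕ) : ℝ)

lemma fscale_two_mul (j : ℕ) : fscale (2 * j) = fseq j j := by
  simp only [fscale]; congr 2 <;> omega

lemma fscale_two_mul_add_one (j : ℕ) : fscale (2 * j + 1) = fseq (j + 1) j := by
  simp only [fscale]; congr 2 <;> omega

lemma one_le_fscale (k : ℕ) : 1 ≤ fscale k := one_le_fseq _ (Nat.cast_nonneg _)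

lemma pow_mul_fscale_le (k : ℕ) : (8:ℝ) ^ k * fscale k ≤ fscale (k + 1) := by
  obtain ⟨j, rfl | rfl⟩ := Nat.even_or_odd' k
  · rw [fscale_two_mul, fscale_two_mul_add_one]
    cases j with
    | zero => simp [fseq]
    | succ i =>
      have hx : (1:ℝ) ≤ ((i + 1 : ℕ) : ℝ) := by simp
      have h4 : 4 * ((i + 1 : ℕ) : ℝ) ≤ fseq (i + 1) ((i + 1 : ℕ) : ℝ) := by
        have hB := one_add_mul_self_le_rpow_one_add (show (-1:ℝ) ≤ 7 by norm_num) hx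
        rw [show (1:ℝ) + 7 = 8 by norm_num] at hB
        linarith [rpow_eight_le_fseq i (x := ((i + 1 : ℕ) : ℝ)) (by linarith)]
      rw [fseq_add_two, ← rpow_natCast, Nat.cast_mul, Nat.cast_two]
      exact rpow_eight_mul_le (by linarith) h4
  · rw [fscale_two_mul_add_one, show 2 * j + 1 + 1 = 2 * (j + 1) by ring, fscale_two_mul]
    cases j with
    | zero => norm_num [fseq]
    | succ i =>
      have hx : (0:ℝ) ≤ ((i + 1 : ℕ) : ℝ) := Nat.cast_nonneg _
      have hG : 1 + 2 * ((i + 1 : ℕ) : ℝ) ≤ fseq (i + 1) ((i + 1 : ℕ) : ℝ) :=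
        (one_add_two_mul_le_rpow_eight hx).trans (rpow_eight_le_fseq i hx)
      have hshift := eight_mul_fseq_le i hx
      rw [fseq_add_two, fseq_add_two, ← rpow_natCast, ← rpow_add (by norm_num),
        show ((i + 1 + 1 : ℕ) : ℝ) = ((i + 1 : ℕ) : ℝ) + 1 by push_cast; ring]
      refine rpow_le_rpow_of_exponent_le (by norm_num) ?_
      rw [show ((2 * (i + 1) + 1 : ℕ) : ℝ) = 1 + 2 * ((i + 1 : ℕ) : ℝ) by push_cast; ring]
      linarith

lemma fscale_le_rpow (k : ℕ) : fscale (k + 2) ≤ (8:ℝ) ^ fscale (k + 1) := by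
  obtain ⟨j, rfl | rfl⟩ := Nat.even_or_odd' k
  · rw [show 2 * j + 2 = 2 * (j + 1) by ring, fscale_two_mul, fscale_two_mul_add_one,
      ← fseq_add_two]
    refine fseq_mono (j + 1) ?_
    push_cast
    linarith [one_add_two_mul_le_rpow_eight (Nat.cast_nonneg (α := ℝ) j)]
  · rw [show 2 * j + 1 + 2 = 2 * (j + 1) + 1 by ring, show 2 * j + 1 + 1 = 2 * (j + 1) by ring,
      fscale_two_mul, fscale_two_mul_add_one, fseq_add_two]

lemma le_div_pow_mul_Nscale {c₁ u₀ : ℝ} (hc₁ : 0 ≤ c₁) (hu₀ : 0 < u₀) (k : ℕ) :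
    240 * c₁ ≤ u₀ / 8 ^ k * Nscale c₁ u₀ k := by
  have hF : 0 < fscale k := one_pos.trans_le (one_le_fscale k)
  have hratio : 1 ≤ fscale (k + 1) / (8 ^ k * fscale k) :=
    (one_le_div (by positivity)).mpr (pow_mul_fscale_le k)
  calc 240 * c₁ ≤ 240 * c₁ * (fscale (k + 1) / (8 ^ k * fscale k)) :=
        le_mul_of_one_le_right (by positivity) hratio
    _ = u₀ / 8 ^ k * Nscale c₁ u₀ k := by
        simp only [Nscale, fscale]
        field_simp

lemma add_one_le_pow_of_two_le {B : ℝ} (hB : 2 ≤ B) (k : ℕ) : (k + 1 : ℝ) ≤ B ^ k := by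
  have h := one_add_mul_le_pow (show (-2:ℝ) ≤ B - 1 by linarith) k
  rw [add_sub_cancel] at h
  nlinarith [(Nat.cast_nonneg k : (0:ℝ) ≤ k)]

-- Condition (G)(ii) after taking logarithms, with `A = α c₁/u₀`, `F = F_{k+1}`, `F' = F_{k+2}`.
lemma log_scale_le {a P Q A F F' L₀ : ℝ} (k : ℕ) (ha : 0 ≤ a) (hP : 1 ≤ P)
    (hQ : Q ≤ 2 * P) (hF : 1 ≤ F) (hF'0 : 0 < F') (hF' : F' ≤ 8 ^ F) (hL₀ : 1 ≤ L₀)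
    (hA : 80 ≤ A) (hlogA : 96 * log A ≤ A) (haL₀ : 32 * (a + 2 * log L₀) ≤ A) :
    a + P * log (A * F' / F) + Q * log (F * A ^ (k + 1) * L₀) ≤ P * F * (A / 8) ^ (k + 1) := by
  set B := A / 8 with hB
  have hA0 : 0 < A := by linarith
  have hF0 : 0 < F := by linarith
  have hlogA0 : 0 ≤ log A := log_nonneg (by linarith)
  have hlogF : log F ≤ F := by linarith [log_le_sub_one_of_pos hF0]
  have hlogF0 : 0 ≤ log F := log_nonneg hF
  have hlogF' : log F' ≤ 3 * F := by
    have := log_le_log hF'0 hF'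
    rw [log_rpow (by norm_num)] at this
    nlinarith [log_eight_le_three]
  have hN : log (A * F' / F) ≤ log A + 3 * F := by
    rw [log_div (by positivity) hF0.ne', log_mul hA0.ne' hF'0.ne']
    linarith
  have hL : log (F * A ^ (k + 1) * L₀) ≤ F + (k + 1) * log A + log L₀ := by
    rw [log_mul (by positivity) (by positivity), log_mul hF0.ne' (by positivity), log_pow]
    push_cast
    linarith
  have hL0 : 0 ≤ log (F * A ^ (k + 1) * L₀) :=
    log_nonneg (one_le_mul_of_one_le_of_one_le
      (one_le_mul_of_one_le_of_one_le hF (one_le_pow₀ (by linarith))) hL₀)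
  have hB10 : 10 ≤ B := by linarith
  have hBk : (k + 1 : ℝ) ≤ B ^ k := add_one_le_pow_of_two_le (by linarith) k
  have hBpow : B ≤ B ^ (k + 1) := le_self_pow₀ (by linarith) (by omega)
  -- the three contributions, each bounded by a fraction of `B ^ (k + 1) ≤ F * B ^ (k + 1)`
  have h₁ : a + 2 * log L₀ ≤ B ^ (k + 1) / 4 := by linarith
  have h₂ : 3 * (k + 1) * log A ≤ B ^ (k + 1) / 4 := by
    rw [pow_succ]
    nlinarith [mul_le_mul hBk (show 12 * log A ≤ B by linarith) (by positivity) (by positivity)]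
  have h₃ : 5 * F ≤ F * B ^ (k + 1) / 2 := by nlinarith
  have hX : a + 2 * log L₀ + 3 * (k + 1) * log A + 5 * F ≤ F * B ^ (k + 1) := by
    nlinarith
  have hPa : a ≤ P * a := le_mul_of_one_le_left ha hP
  have hPN : P * log (A * F' / F) ≤ P * (log A + 3 * F) :=
    mul_le_mul_of_nonneg_left hN (by linarith)
  have hQL : Q * log (F * A ^ (k + 1) * L₀) ≤ 2 * P * (F + (k + 1) * log A + log L₀) :=
    mul_le_mul hQ hL hL0 (by linarith)
  have hPk : 0 ≤ P * (k * log A) := by positivity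
  calc a + P * log (A * F' / F) + Q * log (F * A ^ (k + 1) * L₀)
      ≤ P * (a + 2 * log L₀ + 3 * (k + 1) * log A + 5 * F) := by linarith
    _ ≤ P * (F * B ^ (k + 1)) := mul_le_mul_of_nonneg_left hX (by linarith)
    _ = P * F * B ^ (k + 1) := by ring

lemma scale_condition_le_one {c κ c₁ u₀ L₀ : ℝ} {P Q : ℕ} (k : ℕ) (hc : 1 ≤ c) (hκ : 0 < κ)
    (hL₀ : 1 ≤ L₀) (hP : 1 ≤ P) (hQ : Q ≤ 2 * P)
    (hu₀L₀ : log (1 / κ) * (u₀ * L₀) = P) (hA : 80 ≤ 240 * c₁ / u₀)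
    (hlogA : 96 * log (240 * c₁ / u₀) ≤ 240 * c₁ / u₀)
    (hcL₀ : 32 * (log c + 2 * log L₀) ≤ 240 * c₁ / u₀) :
    c * Nscale c₁ u₀ (k + 1) ^ P * Lscale c₁ u₀ L₀ (k + 1) ^ Q *
      κ ^ (u₀ / 8 ^ (k + 1) * Lscale c₁ u₀ L₀ (k + 1)) ≤ 1 := by
  have hN : Nscale c₁ u₀ (k + 1) = 240 * c₁ / u₀ * fscale (k + 2) / fscale (k + 1) := rfl
  have hL : Lscale c₁ u₀ L₀ (k + 1) = fscale (k + 1) * (240 * c₁ / u₀) ^ (k + 1) * L₀ := rfl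
  generalize 240 * c₁ / u₀ = A at hN hL hA hlogA hcL₀
  have hF := one_le_fscale (k + 1)
  have hF' := one_le_fscale (k + 2)
  have hA0 : 0 < A := by linarith
  have hNpos : 0 < Nscale c₁ u₀ (k + 1) := by
    rw [hN]; exact div_pos (by nlinarith) (by linarith)
  have hLpos : 0 < Lscale c₁ u₀ L₀ (k + 1) := by
    rw [hL]; exact mul_pos (by positivity) (by linarith)
  have hexp : u₀ / 8 ^ (k + 1) * Lscale c₁ u₀ L₀ (k + 1) * log κ =
      -(P * fscale (k + 1) * (A / 8) ^ (k + 1)) := by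
    rw [hL, div_pow, ← hu₀L₀, one_div, log_inv]
    ring
  rw [← log_nonpos_iff (by positivity), log_mul (by positivity) (by positivity),
    log_mul (by positivity) (by positivity), log_mul (by positivity) (by positivity),
    log_pow, log_pow, log_rpow hκ, hexp, hN, hL]
  have := log_scale_le k (log_nonneg hc) (by exact_mod_cast hP : (1:ℝ) ≤ P)
    (by exact_mod_cast hQ : (Q:ℝ) ≤ 2 * P) hF
    (by linarith) (fscale_le_rpow k) hL₀ hA hlogA hcL₀
  linarith

lemma eventually_scale_large (K a : ℝ) (hK : 0 < K) :
    ∀ᶠ L in atTop,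
      1 ≤ L ∧ 80 ≤ K * L ∧ 96 * log (K * L) ≤ K * L ∧ 32 * (a + 2 * log L) ≤ K * L := by
  have hKL : Tendsto (fun L => K * L) atTop atTop := tendsto_id.const_mul_atTop hK
  have hlog : ∀ c > 0, ∀ᶠ x in atTop, log x ≤ c * x := fun c hc => by
    filter_upwards [isLittleO_log_id_atTop.bound hc, eventually_ge_atTop 0] with x hx hx0
    rw [norm_eq_abs, id, norm_of_nonneg hx0] at hx
    exact (le_abs_self _).trans hx
  filter_upwards [eventually_ge_atTop 1, hKL.eventually_ge_atTop 80,
    hKL.eventually (hlog (1 / 96) (by norm_num)), hKL.eventually_ge_atTop (64 * a),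
    hlog (K / 128) (by positivity)] with L h1 h80 hlogKL ha hlogL
  refine ⟨h1, h80, by linarith, by linarith⟩

/-- There is a constant `c₆ = c₆(d,κ)` such that whenever `L₀ ≥ c₆`, the chosen scales
`N_k`, `L_k` satisfy condition (G): `u_k N_k ≥ α c₁` for all `k ≥ 0`, and
`c₅ N_{k+1}^{3(d-1)} L_{k+1}^{3d-1} κ^{u_{k+1} L_{k+1}} ≤ 1` for all `k ≥ 0`
(with `α = 240`, `c₁ = √d`, `c₅ = 2 c₃ c₄`). -/
theorem chosen_scales_condition_G (d : ℕ) (hd : 2 ≤ d) (κ : ℝ) (hκ0 : 0 < κ) (hκ1 : κ < 1)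
    (c₃ c₄ : ℝ) (hc₃ : 1 < c₃) (hc₄ : 1 < c₄) :
    ∃ c₆ : ℝ, ∀ L₀ : ℝ, c₆ ≤ L₀ →
      (∀ k : ℕ,
        240 * Real.sqrt d ≤ useq d L₀ κ k * Nscale (Real.sqrt d) (u0 d L₀ κ) k) ∧
      (∀ k : ℕ,
        2 * c₃ * c₄ * (Nscale (Real.sqrt d) (u0 d L₀ κ) (k + 1)) ^ (3 * (d - 1)) *
            (Lscale (Real.sqrt d) (u0 d L₀ κ) L₀ (k + 1)) ^ (3 * d - 1) *
            κ ^ (useq d L₀ κ (k + 1) * Lscale (Real.sqrt d) (u0 d L₀ κ) L₀ (k + 1)) ≤ 1) := by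
  have hlog : 0 < log (1 / κ) := log_pos (one_lt_one_div hκ0 hκ1)
  have hd1 : (0:ℝ) < d - 1 := by
    have : (2:ℝ) ≤ d := by exact_mod_cast hd
    linarith
  set K := 240 * √d * log (1 / κ) / (3 * (d - 1))
  obtain ⟨c₆, hc₆⟩ := eventually_atTop.1
    (eventually_scale_large K (log (2 * c₃ * c₄)) (by positivity))
  refine ⟨c₆, fun L₀ hL₀ => ?_⟩
  obtain ⟨hL₀1, hA, hlogA, hcL₀⟩ := hc₆ L₀ hL₀
  have hu₀ : 0 < u0 d L₀ κ := div_pos (by linarith) (by positivity)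
  have hKL₀ : K * L₀ = 240 * √d / u0 d L₀ κ := by
    simp only [K, u0]
    field_simp
  have hu₀L₀ : log (1 / κ) * (u0 d L₀ κ * L₀) = ((3 * (d - 1) : ℕ) : ℝ) := by
    rw [Nat.cast_mul, Nat.cast_sub (by omega)]
    simp only [u0]
    field_simp
    ring
  rw [hKL₀] at hA hlogA hcL₀
  exact ⟨le_div_pow_mul_Nscale (sqrt_nonneg _) hu₀, fun k =>
    scale_condition_le_one k (by nlinarith) hκ0 hL₀1 (by omega) (by omega) hu₀L₀ hA hlogA hcL₀⟩
end
end

section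
/- For every integer n ≥ 1 and all real numbers a, b ≥ 1, one has f_n(a+b) ≥ f_n(a) · f_n(b). -/
noncomputable section

open Real Filter

/-!
For `n ≥ 2` we have `f_n(x) = f_{n-1}(8^x)`, and for `a, b ≥ 1` both `8^a` and `8^b` are at least
`8 ≥ 2`, so `8^a + 8^b ≤ 8^a · 8^b = 8^(a+b)`. Superadditivity of `f_{n-1}` on `[1, ∞)` and
monotonicity of `f_{n-1}` then give `f_n(a) f_n(b) ≤ f_{n-1}(8^a + 8^b) ≤ f_n(a+b)`; the base case
`f_1(a) f_1(b) = f_1(a+b)` is the law of exponents.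
-/

lemma fseq_succ_succ (k : ℕ) (x : ℝ) : fseq (k + 2) x = fseq (k + 1) (8 ^ x) := rfl

lemma fseq_monotone : ∀ n, Monotone (fseq n)
  | 0 => monotone_const
  | 1 => fun _ _ h => rpow_le_rpow_of_exponent_le (by norm_num) h
  | k + 2 => fun _ _ h => fseq_monotone (k + 1) (rpow_le_rpow_of_exponent_le (by norm_num) h)

lemma rpow_add_rpow_le_rpow_add {r a b : ℝ} (hr : 2 ≤ r) (ha : 1 ≤ a) (hb : 1 ≤ b) :
    r ^ a + r ^ b ≤ r ^ (a + b) := by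
  have hr₁ : 1 ≤ r := by linarith
  have two_le_rpow {c : ℝ} (hc : 1 ≤ c) : 2 ≤ r ^ c :=
    hr.trans (by simpa using rpow_le_rpow_of_exponent_le hr₁ hc)
  rw [rpow_add (by linarith)]
  exact add_le_mul (two_le_rpow ha) (two_le_rpow hb)

theorem fseq_superadditive_general (n : ℕ) (a b : ℝ) (ha : 1 ≤ a) (hb : 1 ≤ b) :
    fseq n a * fseq n b ≤ fseq n (a + b) := by
  induction n generalizing a b with
  | zero => simp [fseq]
  | succ k ih =>
    cases k with
    | zero => exact (rpow_add (by norm_num) a b).ge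
    | succ k =>
      have one_le_eight_rpow {c : ℝ} (hc : 1 ≤ c) : 1 ≤ (8 : ℝ) ^ c :=
        one_le_rpow (by norm_num) (by linarith)
      simp only [fseq_succ_succ]
      calc fseq (k + 1) (8 ^ a) * fseq (k + 1) (8 ^ b)
          ≤ fseq (k + 1) (8 ^ a + 8 ^ b) := ih _ _ (one_le_eight_rpow ha) (one_le_eight_rpow hb)
        _ ≤ fseq (k + 1) (8 ^ (a + b)) :=
          fseq_monotone _ (rpow_add_rpow_le_rpow_add (by norm_num) ha hb)

/-- For every integer `n ≥ 1` and all reals `a, b ≥ 1`, `f_n(a+b) ≥ f_n(a)·f_n(b)`. -/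
theorem fseq_superadditive (n : ℕ) (hn : 1 ≤ n) (a b : ℝ) (ha : 1 ≤ a) (hb : 1 ≤ b) :
    fseq n a * fseq n b ≤ fseq n (a + b) :=
  fseq_superadditive_general n a b ha hb
end
end
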